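/- arXiv:2404.00985 — 4 statements merged into one kernel-verified Lean document; each statement's English description precedes it below -/
import Mathlib

section
/- Abstract instability mechanism: let k > 0, c₀ > 0 and C > 0 be constants, and let b : [0,∞) → (0,∞) and d : [0,∞) → [0,∞) be functions such that c₀ ≤ C · b(t)^{k/(k+2)} · d(t)^{2/(k+2)} for all t ≥ 0, and liminf_{t→∞} t·b(t)² = 0. Then limsup_{t→∞} t^{-k/4}·d(t) = ∞. -/
open Filter

/-- Abstract instability mechanism: if `c₀ ≤ C·b(t)^{k/(k+2)}·d(t)^{2/(k+2)}` for all
`t ≥ 0` and `liminf_{t→∞} t·b(t)² = 0` (expressed as: `t·b(t)²` is frequently below any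
`ε > 0`), then `limsup_{t→∞} t^{-k/4}·d(t) = ∞` (expressed as: `t^{-k/4}·d(t)` frequently
exceeds any `M`). -/
theorem abstract_instability_mechanism
    (k c₀ C : ℝ) (hk : 0 < k) (hc₀ : 0 < c₀) (hC : 0 < C)
    (b d : ℝ → ℝ)
    (hb : ∀ t : ℝ, 0 ≤ t → 0 < b t)
    (hd : ∀ t : ℝ, 0 ≤ t → 0 ≤ d t)
    (hlow : ∀ t : ℝ, 0 ≤ t → c₀ ≤ C * b t ^ (k / (k + 2)) * d t ^ (2 / (k + 2)))
    (hliminf : ∀ ε : ℝ, 0 < ε → ∃ᶠ t in atTop, t * b t ^ 2 < ε) :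
    ∀ M : ℝ, ∃ᶠ t in atTop, M < t ^ (-(k / 4)) * d t := by
  intro M
  have hk2 : (0:ℝ) < k + 2 := by linarith
  set r : ℝ := (k + 2) / 2 with hrdef
  have hr : 0 < r := by positivity
  set A : ℝ := (c₀ / C) ^ r with hAdef
  have hApos : 0 < A := Real.rpow_pos_of_pos (by positivity) r
  set ε : ℝ := (A / (|M| + 1)) ^ (4 / k) with hεdef
  have hM1 : (0:ℝ) < |M| + 1 := by positivity
  have hεpos : 0 < ε := Real.rpow_pos_of_pos (by positivity) _
  have hεk : ε ^ (k / 4) = A / (|M| + 1) := by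
    rw [hεdef, ← Real.rpow_mul (by positivity)]
    rw [show (4 / k) * (k / 4) = 1 by field_simp]
    exact Real.rpow_one _
  refine ((hliminf ε hεpos).and_eventually (eventually_ge_atTop (1:ℝ))).mono ?_
  rintro t ⟨hlt, ht1⟩
  have htpos : (0:ℝ) < t := by linarith
  have ht0 : (0:ℝ) ≤ t := htpos.le
  have hx := hb t ht0
  have hy := hd t ht0
  have key := hlow t ht0
  have hypos : 0 < d t := by
    by_contra h
    push_neg at h
    have hdz : d t = 0 := le_antisymm h hy
    rw [hdz, Real.zero_rpow (by positivity : (2:ℝ)/(k+2) ≠ 0), mul_zero] at key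
    linarith
  have h1 : c₀ / C ≤ b t ^ (k/(k+2)) * d t ^ (2/(k+2)) := by
    rw [div_le_iff₀ hC]
    nlinarith [key]
  have h2 : A ≤ (b t ^ (k/(k+2)) * d t ^ (2/(k+2))) ^ r :=
    Real.rpow_le_rpow (by positivity) h1 hr.le
  have h3 : (b t ^ (k/(k+2)) * d t ^ (2/(k+2))) ^ r = b t ^ (k/2) * d t := by
    rw [Real.mul_rpow (by positivity) (by positivity),
        ← Real.rpow_mul hx.le, ← Real.rpow_mul hy]
    rw [show k/(k+2) * r = k/2 by rw [hrdef]; field_simp]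
    rw [show 2/(k+2) * r = 1 by rw [hrdef]; field_simp]
    rw [Real.rpow_one]
  rw [h3] at h2
  have hb2 : b t ^ (k/2) = (b t ^ 2) ^ (k/4) := by
    rw [← Real.rpow_natCast (b t) 2, ← Real.rpow_mul hx.le]
    norm_num
    congr 1
    ring
  have hd_ge : A / (b t ^ 2) ^ (k/4) ≤ d t := by
    rw [div_le_iff₀ (by positivity)]
    calc A ≤ b t ^ (k/2) * d t := h2
    _ = d t * (b t ^ 2) ^ (k/4) := by rw [hb2]; ring
  have hlt' : (t * b t ^ 2) ^ (k/4) < ε ^ (k/4) :=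
    Real.rpow_lt_rpow (by positivity) hlt (by positivity)
  calc M < |M| + 1 := by have := le_abs_self M; linarith
  _ = A / ε ^ (k/4) := by rw [hεk]; field_simp
  _ < A / (t * b t ^ 2) ^ (k/4) := by
      exact div_lt_div_of_pos_left hApos (by positivity) hlt'
  _ = (t ^ (k/4))⁻¹ * (A / (b t ^ 2) ^ (k/4)) := by
      rw [Real.mul_rpow ht0 (by positivity)]
      field_simp
  _ ≤ (t ^ (k/4))⁻¹ * d t := by
      exact mul_le_mul_of_nonneg_left hd_ge (by positivity)
  _ = t ^ (-(k/4)) * d t := by rw [Real.rpow_neg ht0]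
end

section
/- Let T > 0, n ∈ ℕ, A > 0, and let f, g, h : [0,T] → [0,∞) be smooth nonnegative functions satisfying d/dt f(t) ≤ -g(t) + h(t) for all t ∈ [0,T], and suppose the averaged decay bounds (2/t)∫_{t/2}^{t} f(s) ds ≤ A/t^{n-1} and (2/t)∫_{t/2}^{t} h(s) ds ≤ A/t^{n} hold for all t ∈ (0,T]. Then there is a constant C > 0 (independent of T, f, g, h, A) such that (2/t)∫_{t/2}^{t} g(s) ds ≤ C·A/t^{n} for all t ∈ (0,T]. -/
open Set intervalIntegral

private lemma intOn {F : ℝ → ℝ} {T a b : ℝ} (hF : ContinuousOn F (Icc 0 T))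
    (hab : a ≤ b) (h0 : 0 ≤ a) (hbT : b ≤ T) :
    IntervalIntegrable F MeasureTheory.volume a b := by
  apply ContinuousOn.intervalIntegrable
  rw [uIcc_of_le hab]
  exact hF.mono (Icc_subset_Icc h0 hbT)

/-- ODE lemma (Lemma A.2): given `n ∈ ℕ`, there is a constant `C > 0` (independent of
`T, f, g, h, A`) such that whenever smooth nonnegative `f, g, h : [0,T] → [0,∞)` satisfy
`d/dt f ≤ -g + h` on `[0,T]`, `(2/t)∫_{t/2}^t f ≤ A/t^{n-1}` and
`(2/t)∫_{t/2}^t h ≤ A/t^n` for all `t ∈ (0,T]`, then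
`(2/t)∫_{t/2}^t g ≤ C·A/t^n` for all `t ∈ (0,T]`. -/
theorem ode_averaged_decay (n : ℕ) :
    ∃ C : ℝ, 0 < C ∧
      ∀ (T A : ℝ) (f g h : ℝ → ℝ), 0 < T → 0 < A →
        ContDiffOn ℝ (⊤ : ℕ∞) f (Icc 0 T) → ContDiffOn ℝ (⊤ : ℕ∞) g (Icc 0 T) →
        ContDiffOn ℝ (⊤ : ℕ∞) h (Icc 0 T) →
        (∀ t ∈ Icc (0 : ℝ) T, 0 ≤ f t) →
        (∀ t ∈ Icc (0 : ℝ) T, 0 ≤ g t) →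
        (∀ t ∈ Icc (0 : ℝ) T, 0 ≤ h t) →
        (∀ t ∈ Icc (0 : ℝ) T, derivWithin f (Icc 0 T) t ≤ -g t + h t) →
        (∀ t ∈ Ioc (0 : ℝ) T,
          (2 / t) * ∫ s in (t / 2)..t, f s ≤ A / t ^ ((n : ℤ) - 1)) →
        (∀ t ∈ Ioc (0 : ℝ) T,
          (2 / t) * ∫ s in (t / 2)..t, h s ≤ A / t ^ (n : ℤ)) →
        ∀ t ∈ Ioc (0 : ℝ) T,
          (2 / t) * ∫ s in (t / 2)..t, g s ≤ C * A / t ^ (n : ℤ) := by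
  refine ⟨3 * 2 ^ n, by positivity, ?_⟩
  intro T A f g h hT hA hf hg hh hfpos hgpos hhpos hderiv hfavg hhavg t ht
  obtain ⟨ht0, htT⟩ := ht
  have hfc : ContinuousOn f (Icc 0 T) := hf.continuousOn
  have hgc : ContinuousOn g (Icc 0 T) := hg.continuousOn
  have hhc : ContinuousOn h (Icc 0 T) := hh.continuousOn
  have hf'c : ContinuousOn (derivWithin f (Icc 0 T)) (Icc 0 T) :=
    hf.continuousOn_derivWithin (uniqueDiffOn_Icc hT) (by simp)
  set f' : ℝ → ℝ := derivWithin f (Icc 0 T) with hf'def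
  -- Step 1: pointwise bound for s ∈ [t/4, t/2]
  have key : ∀ s ∈ Icc (t/4) (t/2),
      (∫ u in (t/2)..t, g u) ≤ f s + ∫ u in (t/4)..t, h u := by
    intro s hs
    obtain ⟨hs1, hs2⟩ := hs
    have hs0 : 0 < s := lt_of_lt_of_le (by linarith) hs1
    have hst : s ≤ t := by linarith
    have hsT : s ≤ T := hst.trans htT
    -- FTC
    have ftc : ∫ u in s..t, f' u = f t - f s := by
      apply intervalIntegral.integral_eq_sub_of_hasDeriv_right_of_le hst
      · exact hfc.mono (Icc_subset_Icc hs0.le htT)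
      · intro x hx
        have hxmem : Icc (0:ℝ) T ∈ nhds x :=
          Icc_mem_nhds (by linarith [hx.1]) (by linarith [hx.2])
        have hdiff : DifferentiableAt ℝ f x :=
          ((hf.differentiableOn (by simp)) x (mem_of_mem_nhds hxmem)).differentiableAt hxmem
        have : HasDerivAt f (deriv f x) x := hdiff.hasDerivAt
        rw [hf'def, derivWithin_of_mem_nhds hxmem]
        exact this.hasDerivWithinAt
      · exact intOn hf'c hst hs0.le (htT)
    have hintg : IntervalIntegrable g MeasureTheory.volume s t := intOn hgc hst hs0.le htT
    have hinth : IntervalIntegrable h MeasureTheory.volume s t := intOn hhc hst hs0.le htT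
    have hmono : ∫ u in s..t, f' u ≤ ∫ u in s..t, (-g u + h u) := by
      apply intervalIntegral.integral_mono_on hst (intOn hf'c hst hs0.le htT)
        (hintg.neg.add hinth)
      intro x hx
      exact hderiv x ⟨hs0.le.trans hx.1, hx.2.trans htT⟩
    have hsum : ∫ u in s..t, (-g u + h u) = -(∫ u in s..t, g u) + ∫ u in s..t, h u := by
      have := intervalIntegral.integral_add hintg.neg hinth
      simpa [intervalIntegral.integral_neg] using this
    -- split g integral
    have hsplitg : (∫ u in s..(t/2), g u) + ∫ u in (t/2)..t, g u = ∫ u in s..t, g u :=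
      intervalIntegral.integral_add_adjacent_intervals
        (intOn hgc hs2 hs0.le (by linarith)) (intOn hgc (by linarith) (by linarith) htT)
    have hgnn : 0 ≤ ∫ u in s..(t/2), g u := by
      apply intervalIntegral.integral_nonneg hs2
      intro u hu
      exact hgpos u ⟨hs0.le.trans hu.1, hu.2.trans (by linarith)⟩
    -- split h integral
    have hsplith : (∫ u in (t/4)..s, h u) + ∫ u in s..t, h u = ∫ u in (t/4)..t, h u :=
      intervalIntegral.integral_add_adjacent_intervals
        (intOn hhc hs1 (by linarith) hsT) (intOn hhc hst hs0.le htT)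
    have hhnn : 0 ≤ ∫ u in (t/4)..s, h u := by
      apply intervalIntegral.integral_nonneg hs1
      intro u hu
      exact hhpos u ⟨le_trans (by linarith) hu.1, hu.2.trans hsT⟩
    have hft : 0 ≤ f t := hfpos t ⟨ht0.le, htT⟩
    rw [ftc, hsum] at hmono
    linarith
  -- Step 2: average over s ∈ [t/4, t/2]
  set G := ∫ u in (t/2)..t, g u with hG
  set H := ∫ u in (t/4)..t, h u with hH
  have h14 : (0:ℝ) < t/4 := by linarith
  have h12T : t/2 ≤ T := by linarith
  have hintf14 : IntervalIntegrable f MeasureTheory.volume (t/4) (t/2) :=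
    intOn hfc (by linarith) h14.le h12T
  have avg : ∫ s in (t/4)..(t/2), G ≤ ∫ s in (t/4)..(t/2), (f s + H) := by
    apply intervalIntegral.integral_mono_on (by linarith) intervalIntegrable_const
      (hintf14.add intervalIntegrable_const)
    exact key
  rw [intervalIntegral.integral_const,
    intervalIntegral.integral_add hintf14 intervalIntegrable_const,
    intervalIntegral.integral_const] at avg
  simp only [smul_eq_mul] at avg
  -- Step 3: use the hypotheses
  have ht2 : t/2 ∈ Ioc (0:ℝ) T := ⟨by linarith, h12T⟩
  have hF := hfavg (t/2) ht2
  have hH1 := hhavg (t/2) ht2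
  have hH2 := hhavg t ⟨ht0, htT⟩
  rw [show t/2/2 = t/4 by ring] at hF hH1
  have ht2ne : (t/2 : ℝ) ≠ 0 := by positivity
  have htne : t ≠ 0 := ne_of_gt ht0
  rw [zpow_sub₀ ht2ne, zpow_one, zpow_natCast] at hF
  rw [zpow_natCast] at hH1 hH2 ⊢
  have htn : (0:ℝ) < t^n := pow_pos ht0 n
  have h2np : (0:ℝ) < (2:ℝ)^n := by positivity
  have h2n : (1:ℝ) ≤ 2^n := one_le_pow₀ (by norm_num)
  set B := A / t^n with hB
  have hBpos : 0 < B := by positivity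
  have hsplitH : (∫ u in (t/4)..(t/2), h u) + ∫ u in (t/2)..t, h u = H :=
    intervalIntegral.integral_add_adjacent_intervals
      (intOn hhc (by linarith) h14.le h12T) (intOn hhc (by linarith) (by linarith) htT)
  set F := ∫ s in (t/4)..(t/2), f s with hFdef
  set I1 := ∫ u in (t/4)..(t/2), h u with hI1
  set I2 := ∫ u in (t/2)..t, h u with hI2
  have hp : ((t/2:ℝ))^n = t^n / 2^n := div_pow t 2 n
  rw [hp] at hF hH1
  have eF : A / (t^n / 2^n / (t/2)) = B * 2^n * (t/2) := by
    rw [hB]; field_simp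
  have eH : A / (t^n / 2^n) = B * 2^n := by
    rw [hB]; field_simp
  rw [eF] at hF
  rw [eH] at hH1
  rw [show (2:ℝ)/(t/2) = 4/t by rw [div_div_eq_mul_div]; norm_num] at hF hH1
  rw [div_mul_eq_mul_div, div_le_iff₀ ht0] at hF hH1 hH2
  have goal2 : (3 * 2^n) * A / t^n = 3 * 2^n * B := by rw [hB]; ring
  rw [goal2, div_mul_eq_mul_div, div_le_iff₀ ht0]
  -- avg : (t/2 - t/4) * G ≤ F + (t/2 - t/4) * H, with H = I1 + I2
  have hHsum : H = I1 + I2 := hsplitH.symm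
  rw [hHsum] at avg
  nlinarith [avg, hF, mul_le_mul_of_nonneg_left hH1 ht0.le,
    mul_le_mul_of_nonneg_left hH2 ht0.le,
    mul_nonneg (sub_nonneg.mpr h2n) (mul_nonneg hBpos.le (mul_nonneg ht0.le ht0.le)),
    mul_pos ht0 ht0, ht0]
end

section
/- Let T > 0, n ∈ ℕ, A > 0, and let f, g : [0,T] → [0,∞) be smooth nonnegative functions satisfying d/dt f(t) ≤ -f(t) + g(t) for all t ∈ [0,T], and suppose the averaged decay bound (2/t)∫_{t/2}^{t} g(s) ds ≤ A/t^{n} holds for all t ∈ (0,T]. Then there is a constant C > 0 (independent of T, f, g, A) such that (2/t)∫_{t/2}^{t} f(s) ds ≤ C·(A+B)/t^{n} for all t ∈ (0,T], where B := f(0) + ∫₀ᵀ g(s) ds. -/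
open Set intervalIntegral Topology

private lemma prim_hasDerivAt {T : ℝ} (hT : 0 < T) {h : ℝ → ℝ}
    (hc : ContinuousOn h (Icc 0 T)) {x : ℝ} (hx : x ∈ Ioo 0 T) :
    HasDerivAt (fun r => ∫ u in (0:ℝ)..r, h u) (h x) x := by
  have hmem : Icc (0:ℝ) T ∈ 𝓝 x := Icc_mem_nhds hx.1 hx.2
  refine intervalIntegral.integral_hasDerivAt_right ?_ ?_ ?_
  · exact (hc.mono (uIcc_subset_Icc (left_mem_Icc.2 hT.le)
      (Ioo_subset_Icc_self hx))).intervalIntegrable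
  · exact (hc.mono Ioo_subset_Icc_self).stronglyMeasurableAtFilter isOpen_Ioo x hx
  · exact hc.continuousAt hmem

private lemma gronwall_aux {T : ℝ} (hT : 0 < T) {f g : ℝ → ℝ}
    (hfc : ContDiffOn ℝ (⊤ : ℕ∞) f (Icc 0 T)) (hgc : ContDiffOn ℝ (⊤ : ℕ∞) g (Icc 0 T))
    (hderiv : ∀ t ∈ Icc (0:ℝ) T, derivWithin f (Icc 0 T) t ≤ -f t + g t) :
    ∀ r ∈ Icc (0:ℝ) T,
      Real.exp r * f r ≤ f 0 + ∫ u in (0:ℝ)..r, Real.exp u * g u := by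
  have heg : ContinuousOn (fun u => Real.exp u * g u) (Icc 0 T) :=
    Real.continuous_exp.continuousOn.mul hgc.continuousOn
  have hGcont : ContinuousOn (fun r => ∫ u in (0:ℝ)..r, Real.exp u * g u) (Icc 0 T) := by
    have := intervalIntegral.continuousOn_primitive_interval
      (f := fun u => Real.exp u * g u) (μ := MeasureTheory.volume) (a := (0:ℝ)) (b := T)
      (by rw [uIcc_of_le hT.le]; exact heg.integrableOn_Icc)
    rwa [uIcc_of_le hT.le] at this
  have hanti : AntitoneOn
      (fun r => Real.exp r * f r - ∫ u in (0:ℝ)..r, Real.exp u * g u) (Icc 0 T) := by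
    apply antitoneOn_of_deriv_nonpos (convex_Icc 0 T)
    · exact (Real.continuous_exp.continuousOn.mul hfc.continuousOn).sub hGcont
    · rw [interior_Icc]
      intro x hx
      have hmem : Icc (0:ℝ) T ∈ 𝓝 x := Icc_mem_nhds hx.1 hx.2
      have hfd : DifferentiableAt ℝ f x := (hfc.contDiffAt hmem).differentiableAt (by simp)
      exact ((Real.differentiable_exp.differentiableAt.mul hfd).sub
        (prim_hasDerivAt hT heg hx).differentiableAt).differentiableWithinAt
    · rw [interior_Icc]
      intro x hx
      have hmem : Icc (0:ℝ) T ∈ 𝓝 x := Icc_mem_nhds hx.1 hx.2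
      have hfd : DifferentiableAt ℝ f x := (hfc.contDiffAt hmem).differentiableAt (by simp)
      have hD : HasDerivAt
          (fun r => Real.exp r * f r - ∫ u in (0:ℝ)..r, Real.exp u * g u)
          (Real.exp x * f x + Real.exp x * deriv f x - Real.exp x * g x) x :=
        ((Real.hasDerivAt_exp x).mul hfd.hasDerivAt).sub (prim_hasDerivAt hT heg hx)
      rw [hD.deriv]
      have hle := hderiv x (Ioo_subset_Icc_self hx)
      rw [derivWithin_of_mem_nhds hmem] at hle
      nlinarith [mul_le_mul_of_nonneg_left hle (Real.exp_pos x).le]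
  intro r hr
  have h0 : (0:ℝ) ∈ Icc (0:ℝ) T := left_mem_Icc.2 hT.le
  have h := hanti h0 hr hr.1
  simp only [intervalIntegral.integral_same, Real.exp_zero, one_mul, sub_zero] at h
  linarith

private lemma pow_le_exp_aux (n : ℕ) {t : ℝ} (ht : 0 ≤ t) :
    t ^ n ≤ (4*n+4 : ℝ)^n * Real.exp (t/4) := by
  have hd : (0:ℝ) < 4*n+4 := by positivity
  have hx : t/(4*n+4) ≤ Real.exp (t/(4*n+4)) := by
    have := Real.add_one_le_exp (t/(4*n+4)); linarith
  have h1 : t ≤ (4*n+4 : ℝ) * Real.exp (t/(4*n+4)) := by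
    rw [← div_le_iff₀' hd]; exact hx
  calc t^n ≤ ((4*n+4:ℝ) * Real.exp (t/(4*n+4)))^n := pow_le_pow_left₀ ht h1 n
    _ = (4*n+4:ℝ)^n * Real.exp (t/(4*n+4))^n := mul_pow _ _ _
    _ = (4*n+4:ℝ)^n * Real.exp (n * (t/(4*n+4))) := by rw [Real.exp_nat_mul]
    _ ≤ (4*n+4:ℝ)^n * Real.exp (t/4) := by
        have hle : (n:ℝ) * (t/(4*n+4)) ≤ t/4 := by
          rw [mul_div_assoc']
          rw [div_le_div_iff₀ hd (by norm_num : (0:ℝ) < 4)]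
          nlinarith [Nat.cast_nonneg (α := ℝ) n]
        have := Real.exp_le_exp.2 hle
        nlinarith [pow_pos hd n]

private lemma exp_quarter_bound (n : ℕ) {t : ℝ} (ht : 0 < t) :
    Real.exp (-(t/4)) ≤ (4*n+4 : ℝ)^n * (t^n)⁻¹ := by
  have h := pow_le_exp_aux n ht.le
  have he : (0:ℝ) < Real.exp (t/4) := Real.exp_pos _
  have htn : (0:ℝ) < t^n := pow_pos ht n
  have h3 : Real.exp (-(t/4)) * Real.exp (t/4) = 1 := by
    rw [← Real.exp_add]; norm_num
  have key : Real.exp (-(t/4)) * t^n ≤ (4*n+4:ℝ)^n := by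
    have h2 := mul_le_mul_of_nonneg_left h (Real.exp_nonneg (-(t/4)))
    nlinarith
  rw [← div_eq_mul_inv, le_div_iff₀ htn]
  exact key

set_option maxHeartbeats 2000000 in
/-- ODE lemma (Lemma A.3): given `n ∈ ℕ`, there is a constant `C > 0` (independent of
`T, f, g, A`) such that whenever smooth nonnegative `f, g : [0,T] → [0,∞)` satisfy
`d/dt f ≤ -f + g` on `[0,T]` and `(2/t)∫_{t/2}^t g ≤ A/t^n` for all `t ∈ (0,T]`, then
`(2/t)∫_{t/2}^t f ≤ C·(A+B)/t^n` for all `t ∈ (0,T]`, where `B = f(0) + ∫₀ᵀ g`. -/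
theorem ode_averaged_decay_damped (n : ℕ) :
    ∃ C : ℝ, 0 < C ∧
      ∀ (T A : ℝ) (f g : ℝ → ℝ), 0 < T → 0 < A →
        ContDiffOn ℝ (⊤ : ℕ∞) f (Icc 0 T) → ContDiffOn ℝ (⊤ : ℕ∞) g (Icc 0 T) →
        (∀ t ∈ Icc (0 : ℝ) T, 0 ≤ f t) →
        (∀ t ∈ Icc (0 : ℝ) T, 0 ≤ g t) →
        (∀ t ∈ Icc (0 : ℝ) T, derivWithin f (Icc 0 T) t ≤ -f t + g t) →
        (∀ t ∈ Ioc (0 : ℝ) T,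
          (2 / t) * ∫ s in (t / 2)..t, g s ≤ A / t ^ (n : ℤ)) →
        ∀ t ∈ Ioc (0 : ℝ) T,
          (2 / t) * ∫ s in (t / 2)..t, f s
            ≤ C * (A + (f 0 + ∫ s in (0 : ℝ)..T, g s)) / t ^ (n : ℤ) := by
  refine ⟨3 * (4 * (n:ℝ) + 4) ^ n + 2 ^ n + 3, by positivity, ?_⟩
  intro T A f g hT hA hfc hgc hf0 hg0 hderiv havg t ht
  simp only [zpow_natCast] at havg ⊢
  obtain ⟨ht0, htT⟩ := ht
  have ht' : t ≠ 0 := ne_of_gt ht0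
  have htn : (0:ℝ) < t ^ n := pow_pos ht0 n
  have htn' : (t:ℝ) ^ n ≠ 0 := ne_of_gt htn
  set cn : ℝ := (4 * (n:ℝ) + 4) ^ n with hcndef
  have hcn1 : (1:ℝ) ≤ cn := one_le_pow₀ (by nlinarith [Nat.cast_nonneg (α := ℝ) n])
  set B' : ℝ := ∫ s in (0:ℝ)..T, g s with hB'def
  have hgC : ContinuousOn g (Icc 0 T) := hgc.continuousOn
  have hfC : ContinuousOn f (Icc 0 T) := hfc.continuousOn
  have heg : ContinuousOn (fun u => Real.exp u * g u) (Icc 0 T) :=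
    Real.continuous_exp.continuousOn.mul hgC
  have hiC : ∀ {F : ℝ → ℝ}, ContinuousOn F (Icc 0 T) → ∀ {a b : ℝ}, 0 ≤ a → a ≤ b → b ≤ T →
      IntervalIntegrable F MeasureTheory.volume a b := by
    intro F hF a b ha hab hb
    exact (hF.mono (by rw [uIcc_of_le hab]; exact Icc_subset_Icc ha hb)).intervalIntegrable
  set G : ℝ → ℝ := fun r => ∫ u in (0:ℝ)..r, Real.exp u * g u with hGdef
  have hgr := gronwall_aux hT hfc hgc hderiv
  have hpt : ∀ r ∈ Icc (0:ℝ) T, f r ≤ Real.exp (-r) * (f 0 + G r) := by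
    intro r hr
    have h := hgr r hr
    have he : Real.exp (-r) * Real.exp r = 1 := by rw [← Real.exp_add]; norm_num
    have h2 := mul_le_mul_of_nonneg_left h (Real.exp_nonneg (-r))
    calc f r = Real.exp (-r) * Real.exp r * f r := by rw [he]; ring
      _ = Real.exp (-r) * (Real.exp r * f r) := by ring
      _ ≤ Real.exp (-r) * (f 0 + G r) := h2
  have hGcont : ContinuousOn G (Icc 0 T) := by
    have h := intervalIntegral.continuousOn_primitive_interval
      (f := fun u => Real.exp u * g u) (μ := MeasureTheory.volume) (a := (0:ℝ)) (b := T)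
      (by rw [uIcc_of_le hT.le]; exact heg.integrableOn_Icc)
    rw [uIcc_of_le hT.le] at h
    exact h
  have hGnn : ∀ r, 0 ≤ r → r ≤ T → 0 ≤ G r := fun r h1 h2 =>
    intervalIntegral.integral_nonneg h1
      (fun u hu => mul_nonneg (Real.exp_nonneg u) (hg0 u ⟨hu.1, hu.2.trans h2⟩))
  have hf0nn : 0 ≤ f 0 := hf0 0 (left_mem_Icc.2 hT.le)
  have hB'nn : 0 ≤ B' := intervalIntegral.integral_nonneg hT.le (fun u hu => hg0 u hu)
  have hgle : ∀ a b : ℝ, 0 ≤ a → a ≤ b → b ≤ T → (∫ s in a..b, g s) ≤ B' := by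
    intro a b ha hab hb
    refine intervalIntegral.integral_mono_interval ha hab hb ?_ (hiC hgC le_rfl hT.le le_rfl)
    exact MeasureTheory.ae_restrict_of_forall_mem measurableSet_Ioc
      fun x hx => hg0 x ⟨hx.1.le, hx.2⟩
  have hInn : 0 ≤ ∫ s in (t/2)..t, f s :=
    intervalIntegral.integral_nonneg (by linarith)
      (fun u hu => hf0 u ⟨by linarith [hu.1], hu.2.trans htT⟩)
  rcases le_or_gt t 1 with hts | hts
  · -- small time case
    have hE3 : Real.exp 1 ≤ 3 := by nlinarith [Real.exp_one_lt_d9]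
    have hE1 : (1:ℝ) ≤ Real.exp 1 := Real.one_le_exp (by norm_num)
    have hfb : ∀ r ∈ Icc (t/2) t, f r ≤ Real.exp 1 * (f 0 + B') := by
      intro r hr
      have hr0 : 0 ≤ r := le_trans (by linarith) hr.1
      have hrT : r ≤ T := hr.2.trans htT
      have h1 := hpt r ⟨hr0, hrT⟩
      have hGr : G r ≤ Real.exp 1 * B' := by
        have step1 : G r ≤ ∫ u in (0:ℝ)..r, Real.exp 1 * g u := by
          refine intervalIntegral.integral_mono_on hr0 (hiC heg le_rfl hr0 hrT)
            ((hiC hgC le_rfl hr0 hrT).const_mul (Real.exp 1)) ?_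
          intro u hu
          exact mul_le_mul_of_nonneg_right
            (Real.exp_le_exp.2 (hu.2.trans (hr.2.trans hts)))
            (hg0 u ⟨hu.1, hu.2.trans hrT⟩)
        rw [intervalIntegral.integral_const_mul] at step1
        have step2 : (∫ u in (0:ℝ)..r, g u) ≤ B' := hgle 0 r le_rfl hr0 hrT
        nlinarith [Real.exp_pos 1]
      have hexp1 : Real.exp (-r) ≤ 1 := by
        rw [show (1:ℝ) = Real.exp 0 from (Real.exp_zero).symm]
        exact Real.exp_le_exp.2 (by linarith)
      have hGrnn : 0 ≤ G r := hGnn r hr0 hrT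
      nlinarith [Real.exp_nonneg (-r)]
    have hI : (∫ s in (t/2)..t, f s) ≤ (t - t/2) * (Real.exp 1 * (f 0 + B')) := by
      have h := intervalIntegral.integral_mono_on (by linarith : t/2 ≤ t)
        (hiC hfC (by linarith) (by linarith) htT) intervalIntegrable_const hfb
      rwa [intervalIntegral.integral_const, smul_eq_mul] at h
    rw [le_div_iff₀ htn]
    have htn1 : t ^ n ≤ 1 := pow_le_one₀ ht0.le hts
    have hstep : (2/t) * (∫ s in (t/2)..t, f s) ≤ Real.exp 1 * (f 0 + B') := by
      have h := mul_le_mul_of_nonneg_left hI (by positivity : (0:ℝ) ≤ 2/t)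
      calc (2/t) * (∫ s in (t/2)..t, f s)
          ≤ (2/t) * ((t - t/2) * (Real.exp 1 * (f 0 + B'))) := h
        _ = Real.exp 1 * (f 0 + B') := by field_simp; ring
    have h2tInn : 0 ≤ (2/t) * (∫ s in (t/2)..t, f s) :=
      mul_nonneg (by positivity) hInn
    nlinarith [mul_le_mul_of_nonneg_left htn1 h2tInn, hA.le, hcn1, hf0nn, hB'nn,
      pow_pos (show (0:ℝ) < 2 by norm_num) n]
  · -- large time case
    have ht2 : (0:ℝ) < t/2 := by linarith
    have hsub2 : Icc (t/2) t ⊆ Icc 0 T := Icc_subset_Icc (by linarith) htT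
    have hENcont : ContinuousOn (fun r => Real.exp (-r)) (Icc (0:ℝ) T) :=
      (Real.continuous_exp.comp continuous_neg).continuousOn
    have hEGcont : ContinuousOn (fun r => Real.exp (-r) * G r) (Icc 0 T) :=
      hENcont.mul hGcont
    have hRHScont : ContinuousOn (fun r => Real.exp (-r) * (f 0 + G r)) (Icc 0 T) :=
      hENcont.mul (continuousOn_const.add hGcont)
    have hS2 : (∫ s in (t/2)..t, f s) ≤ ∫ r in (t/2)..t, Real.exp (-r) * (f 0 + G r) :=
      intervalIntegral.integral_mono_on (by linarith)
        (hiC hfC ht2.le (by linarith) htT) (hiC hRHScont ht2.le (by linarith) htT)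
        (fun r hr => hpt r (hsub2 hr))
    have hS3 : (∫ r in (t/2)..t, Real.exp (-r) * (f 0 + G r))
        = (∫ r in (t/2)..t, f 0 * Real.exp (-r)) + ∫ r in (t/2)..t, Real.exp (-r) * G r := by
      rw [← intervalIntegral.integral_add
        (hiC (F := fun r => f 0 * Real.exp (-r)) (continuousOn_const.mul hENcont) ht2.le (by linarith) htT)
        (hiC hEGcont ht2.le (by linarith) htT)]
      exact intervalIntegral.integral_congr fun r _ => by ring
    have hS4 : (∫ r in (t/2)..t, f 0 * Real.exp (-r)) ≤ t/2 * (f 0 * Real.exp (-(t/4))) := by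
      have h := intervalIntegral.integral_mono_on (by linarith : t/2 ≤ t)
        (hiC (continuousOn_const.mul hENcont) ht2.le (by linarith) htT)
        intervalIntegrable_const
        (fun r hr => mul_le_mul_of_nonneg_left
          (Real.exp_le_exp.2 (by linarith [hr.1] : -r ≤ -(t/4))) hf0nn)
      rw [intervalIntegral.integral_const, smul_eq_mul] at h
      calc (∫ r in (t/2)..t, f 0 * Real.exp (-r))
          ≤ (t - t/2) * (f 0 * Real.exp (-(t/4))) := h
        _ = t/2 * (f 0 * Real.exp (-(t/4))) := by ring
    have hΨd : ∀ x ∈ Ioo (t/2) t, HasDerivAt (fun r => -(Real.exp (-r) * G r))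
        (Real.exp (-x) * G x - g x) x := by
      intro x hx
      have hx' : x ∈ Ioo (0:ℝ) T := ⟨lt_trans ht2 hx.1, lt_of_lt_of_le hx.2 htT⟩
      have hG : HasDerivAt G (Real.exp x * g x) x := prim_hasDerivAt hT heg hx'
      have he : HasDerivAt (fun r => Real.exp (-r)) (-Real.exp (-x)) x := by
        simpa [Function.comp_def] using (Real.hasDerivAt_exp (-x)).comp x (hasDerivAt_neg x)
      have hmul := (he.mul hG).neg
      have h1 : Real.exp (-x) * Real.exp x = 1 := by rw [← Real.exp_add]; norm_num
      refine hmul.congr_deriv (Eq.symm ?_)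
      linear_combination (g x) * h1
    have hIBP := intervalIntegral.integral_eq_sub_of_hasDeriv_right_of_le
      (f := fun r => -(Real.exp (-r) * G r))
      (f' := fun r => Real.exp (-r) * G r - g r)
      (by linarith : t/2 ≤ t)
      ((hEGcont.mono hsub2).neg)
      (fun x hx => (hΨd x hx).hasDerivWithinAt)
      (hiC (hEGcont.sub hgC) ht2.le (by linarith) htT)
    have hS5 : (∫ r in (t/2)..t, Real.exp (-r) * G r)
        ≤ (∫ r in (t/2)..t, g r) + Real.exp (-(t/2)) * G (t/2) := by
      rw [intervalIntegral.integral_sub (hiC hEGcont ht2.le (by linarith) htT)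
        (hiC hgC ht2.le (by linarith) htT)] at hIBP
      have hGt : 0 ≤ Real.exp (-t) * G t :=
        mul_nonneg (Real.exp_nonneg _) (hGnn t (by linarith) htT)
      linarith [hIBP]
    have hq1 : (t:ℝ)/4 ≤ t/2 := by linarith
    have hGsplit : (∫ u in (0:ℝ)..(t/4), Real.exp u * g u)
        + (∫ u in (t/4)..(t/2), Real.exp u * g u) = G (t/2) :=
      intervalIntegral.integral_add_adjacent_intervals
        (hiC heg le_rfl (by linarith) (by linarith))
        (hiC heg (by linarith) hq1 (by linarith))
    have hp1 : (∫ u in (0:ℝ)..(t/4), Real.exp u * g u) ≤ Real.exp (t/4) * B' := by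
      have h := intervalIntegral.integral_mono_on (by linarith : (0:ℝ) ≤ t/4)
        (hiC heg le_rfl (by linarith) (by linarith))
        ((hiC hgC le_rfl (by linarith) (by linarith)).const_mul (Real.exp (t/4)))
        (fun u hu => mul_le_mul_of_nonneg_right (Real.exp_le_exp.2 hu.2)
          (hg0 u ⟨hu.1, by linarith [hu.2]⟩))
      rw [intervalIntegral.integral_const_mul] at h
      have h2 := hgle 0 (t/4) le_rfl (by linarith) (by linarith)
      nlinarith [Real.exp_pos (t/4)]
    have hp2 : (∫ u in (t/4)..(t/2), Real.exp u * g u)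
        ≤ Real.exp (t/2) * ∫ u in (t/4)..(t/2), g u := by
      have h := intervalIntegral.integral_mono_on hq1
        (hiC heg (by linarith) hq1 (by linarith))
        ((hiC hgC (by linarith) hq1 (by linarith)).const_mul (Real.exp (t/2)))
        (fun u hu => mul_le_mul_of_nonneg_right (Real.exp_le_exp.2 hu.2)
          (hg0 u ⟨by linarith [hu.1], by linarith [hu.2]⟩))
      rwa [intervalIntegral.integral_const_mul] at h
    have hQ : Real.exp (-(t/2)) * G (t/2)
        ≤ Real.exp (-(t/4)) * B' + ∫ u in (t/4)..(t/2), g u := by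
      have e1 : Real.exp (-(t/2)) * Real.exp (t/4) = Real.exp (-(t/4)) := by
        rw [← Real.exp_add]; congr 1; ring
      have e2 : Real.exp (-(t/2)) * Real.exp (t/2) = 1 := by
        rw [← Real.exp_add]; norm_num
      calc Real.exp (-(t/2)) * G (t/2)
          = Real.exp (-(t/2)) * ((∫ u in (0:ℝ)..(t/4), Real.exp u * g u)
              + ∫ u in (t/4)..(t/2), Real.exp u * g u) := by rw [hGsplit]
        _ ≤ Real.exp (-(t/2)) * (Real.exp (t/4) * B'
              + Real.exp (t/2) * ∫ u in (t/4)..(t/2), g u) :=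
            mul_le_mul_of_nonneg_left (add_le_add hp1 hp2) (Real.exp_nonneg _)
        _ = Real.exp (-(t/4)) * B' + ∫ u in (t/4)..(t/2), g u := by
            rw [mul_add, ← mul_assoc, ← mul_assoc, e1, e2, one_mul]
    have havg2 := havg (t/2) ⟨ht2, by linarith⟩
    rw [show t/2/2 = t/4 by ring, show (2:ℝ)/(t/2) = 4/t by
      rw [div_div_eq_mul_div]; ring] at havg2
    have hI2 : (∫ s in (t/4)..(t/2), g s) ≤ t/4 * (2^n * A / t^n) := by
      rw [div_pow, div_div_eq_mul_div] at havg2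
      have h := mul_le_mul_of_nonneg_left havg2 (by positivity : (0:ℝ) ≤ t/4)
      calc (∫ s in (t/4)..(t/2), g s)
          = t/4 * (4/t * ∫ s in (t/4)..(t/2), g s) := by field_simp
        _ ≤ t/4 * (A * 2^n / t^n) := h
        _ = t/4 * (2^n * A / t^n) := by ring
    have hI3 : (∫ s in (t/2)..t, g s) ≤ t/2 * (A / t^n) := by
      have h0 := havg t ⟨ht0, htT⟩
      have h := mul_le_mul_of_nonneg_left h0 (by positivity : (0:ℝ) ≤ t/2)
      calc (∫ s in (t/2)..t, g s)
          = t/2 * (2/t * ∫ s in (t/2)..t, g s) := by field_simp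
        _ ≤ t/2 * (A / t^n) := h
    have hsum : (∫ s in (t/2)..t, f s)
        ≤ t/2 * (f 0 * Real.exp (-(t/4)))
          + (t/2 * (A/t^n) + (Real.exp (-(t/4)) * B' + t/4 * (2^n * A / t^n))) := by
      have h := hS2.trans_eq hS3
      linarith [hS4, hS5, hQ, hI2, hI3]
    have he4b : Real.exp (-(t/4)) ≤ cn * (t^n)⁻¹ := exp_quarter_bound n ht0
    have he4nn : 0 ≤ Real.exp (-(t/4)) := Real.exp_nonneg _
    have h2t2 : 2/t ≤ 2 := by rw [div_le_iff₀ ht0]; linarith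
    have hnum : cn * f 0 + A + 2*cn*B' + 2^n*A ≤ (3*cn + 2^n + 3) * (A + (f 0 + B')) := by
      nlinarith [hcn1, hf0nn, hB'nn, hA.le, pow_pos (show (0:ℝ) < 2 by norm_num) n]
    calc (2/t) * (∫ s in (t/2)..t, f s)
        ≤ (2/t) * (t/2 * (f 0 * Real.exp (-(t/4)))
            + (t/2 * (A/t^n) + (Real.exp (-(t/4)) * B' + t/4 * (2^n * A / t^n)))) :=
          mul_le_mul_of_nonneg_left hsum (by positivity)
      _ = f 0 * Real.exp (-(t/4)) + A/t^n + (2/t) * (Real.exp (-(t/4)) * B')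
            + (1/2) * (2^n * A / t^n) := by field_simp; ring
      _ ≤ f 0 * (cn * (t^n)⁻¹) + A * (t^n)⁻¹ + 2 * (cn * (t^n)⁻¹ * B')
            + 2^n * (A * (t^n)⁻¹) := by
          have h1 : f 0 * Real.exp (-(t/4)) ≤ f 0 * (cn * (t^n)⁻¹) :=
            mul_le_mul_of_nonneg_left he4b hf0nn
          have h2 : A/t^n = A * (t^n)⁻¹ := div_eq_mul_inv _ _
          have h3 : (2/t) * (Real.exp (-(t/4)) * B') ≤ 2 * (cn * (t^n)⁻¹ * B') := by
            have ha : (2/t) * (Real.exp (-(t/4)) * B') ≤ 2 * (Real.exp (-(t/4)) * B') :=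
              mul_le_mul_of_nonneg_right h2t2 (mul_nonneg he4nn hB'nn)
            have hb : Real.exp (-(t/4)) * B' ≤ cn * (t^n)⁻¹ * B' :=
              mul_le_mul_of_nonneg_right he4b hB'nn
            linarith
          have h4 : (1/2) * (2^n * A / t^n) ≤ 2^n * (A * (t^n)⁻¹) := by
            have hx : (2:ℝ)^n * A / t^n = 2^n * (A * (t^n)⁻¹) := by
              rw [div_eq_mul_inv]; ring
            rw [hx]
            have hnn : (0:ℝ) ≤ 2^n * (A * (t^n)⁻¹) := by positivity
            linarith
          linarith
      _ = (cn * f 0 + A + 2*cn*B' + 2^n*A) * (t^n)⁻¹ := by ring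
      _ ≤ (3*cn + 2^n + 3) * (A + (f 0 + B')) * (t^n)⁻¹ :=
          mul_le_mul_of_nonneg_right hnum (by positivity)
      _ = (3*cn + 2^n + 3) * (A + (f 0 + B')) / t^n := (div_eq_mul_inv _ _).symm
end

section
/- Let T > 2 and n > 1, and let f : [0,T] → [0,∞) be a nonnegative continuous function satisfying (2/t)∫_{t/2}^{t} f(s) ds ≤ E/t^{n} for some E > 0 and all t ∈ [2,T]. Then for every α ∈ (1/n, 1] there is a constant C_{α,n} > 0, depending only on α and n (and not on T, f, or E), such that ∫₁ᵀ f(t)^{α} dt ≤ C_{α,n}·E^{α}. -/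
open Set intervalIntegral

private lemma rpow_ptwise {α : ℝ} (hα0 : 0 < α) (hα1 : α ≤ 1)
    {x ε : ℝ} (hx : 0 ≤ x) (hε : 0 < ε) :
    x ^ α ≤ ε ^ α + ε ^ (α - 1) * x := by
  rcases le_or_gt x ε with h | h
  · have h1 : x ^ α ≤ ε ^ α := Real.rpow_le_rpow hx h hα0.le
    have h2 : 0 ≤ ε ^ (α - 1) * x := mul_nonneg (Real.rpow_nonneg hε.le _) hx
    linarith
  · have hx0 : 0 < x := hε.trans h
    have h1 : x ^ (α - 1) ≤ ε ^ (α - 1) :=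
      Real.rpow_le_rpow_of_nonpos hε h.le (by linarith)
    have h2 : x ^ α = x ^ (α - 1) * x := by
      rw [← Real.rpow_add_one hx0.ne' (α - 1)]; ring_nf
    have h3 : x ^ (α - 1) * x ≤ ε ^ (α - 1) * x :=
      mul_le_mul_of_nonneg_right h1 hx0.le
    have h4 : 0 ≤ ε ^ α := Real.rpow_nonneg hε.le α
    linarith

private lemma seg_bound {T α : ℝ} (hα0 : 0 < α) (hα1 : α ≤ 1)
    {f : ℝ → ℝ} (hf : ContinuousOn f (Icc 0 T))
    (hf0 : ∀ t ∈ Icc (0:ℝ) T, 0 ≤ f t)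
    {a b ε : ℝ} (ha : 0 ≤ a) (hab : a ≤ b) (hb : b ≤ T) (hε : 0 < ε) :
    (∫ t in a..b, f t ^ α) ≤ (b - a) * ε ^ α + ε ^ (α - 1) * ∫ t in a..b, f t := by
  have hsub : Icc a b ⊆ Icc 0 T := Icc_subset_Icc ha hb
  have hfc : ContinuousOn f (Icc a b) := hf.mono hsub
  have hfac : ContinuousOn (fun t => f t ^ α) (Icc a b) :=
    hfc.rpow_const (fun x _ => Or.inr hα0.le)
  have hint1 : IntervalIntegrable (fun t => f t ^ α) MeasureTheory.volume a b :=
    hfac.intervalIntegrable_of_Icc hab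
  have hintf : IntervalIntegrable f MeasureTheory.volume a b :=
    hfc.intervalIntegrable_of_Icc hab
  have hint2 : IntervalIntegrable (fun t => ε ^ α + ε ^ (α - 1) * f t)
      MeasureTheory.volume a b := intervalIntegrable_const.add (hintf.const_mul _)
  have hmono := intervalIntegral.integral_mono_on hab hint1 hint2
    (fun x hx => rpow_ptwise hα0 hα1 (hf0 x (hsub hx)) hε)
  calc (∫ t in a..b, f t ^ α) ≤ ∫ t in a..b, (ε ^ α + ε ^ (α - 1) * f t) := hmono
    _ = (b - a) * ε ^ α + ε ^ (α - 1) * ∫ t in a..b, f t := by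
        rw [intervalIntegral.integral_add intervalIntegrable_const (hintf.const_mul _),
          intervalIntegral.integral_const, intervalIntegral.integral_const_mul,
          smul_eq_mul]

private lemma piece_bound {T E n α : ℝ} (hα0 : 0 < α) (hα1 : α ≤ 1)
    {f : ℝ → ℝ} (hE : 0 < E)
    (hf : ContinuousOn f (Icc 0 T)) (hf0 : ∀ t ∈ Icc (0:ℝ) T, 0 ≤ f t)
    (hav : ∀ t ∈ Icc (2:ℝ) T, (2 / t) * ∫ s in (t / 2)..t, f s ≤ E / t ^ n)
    {t : ℝ} (ht : t ∈ Icc (2:ℝ) T) :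
    (∫ s in (t/2)..t, f s ^ α) ≤ E ^ α * t ^ (1 - n * α) := by
  obtain ⟨ht2, htT⟩ := ht
  have ht0 : (0:ℝ) < t := by linarith
  have htn : (0:ℝ) < t ^ n := Real.rpow_pos_of_pos ht0 n
  set ε : ℝ := E / t ^ n with hεdef
  have hε : 0 < ε := div_pos hE htn
  have hI : (∫ s in (t/2)..t, f s) ≤ (t / 2) * ε := by
    have h := hav t ⟨ht2, htT⟩
    have h2t : (0:ℝ) < 2 / t := by positivity
    -- multiply by t/2
    have := mul_le_mul_of_nonneg_left h (by positivity : (0:ℝ) ≤ t / 2)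
    calc (∫ s in (t/2)..t, f s) = (t / 2) * ((2 / t) * ∫ s in (t/2)..t, f s) := by
          field_simp
      _ ≤ (t / 2) * (E / t ^ n) := this
      _ = (t / 2) * ε := rfl
  have hseg := seg_bound hα0 hα1 hf hf0 (by positivity : (0:ℝ) ≤ t / 2)
    (by linarith : t / 2 ≤ t) htT hε
  have hεa : 0 ≤ ε ^ (α - 1) := Real.rpow_nonneg hε.le _
  have hmul : ε ^ (α - 1) * (∫ s in (t/2)..t, f s) ≤ ε ^ (α - 1) * ((t / 2) * ε) :=
    mul_le_mul_of_nonneg_left hI hεa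
  have hεα : ε ^ (α - 1) * ε = ε ^ α := by
    rw [← Real.rpow_add_one hε.ne' (α - 1)]; ring_nf
  have key : (∫ s in (t/2)..t, f s ^ α) ≤ t * ε ^ α := by
    have : (t - t / 2) * ε ^ α + ε ^ (α - 1) * ((t / 2) * ε) = t * ε ^ α := by
      have : ε ^ (α - 1) * ((t / 2) * ε) = (t / 2) * (ε ^ (α - 1) * ε) := by ring
      rw [this, hεα]; ring
    linarith [hseg, hmul]
  have heq : t * ε ^ α = E ^ α * t ^ (1 - n * α) := by
    rw [hεdef, Real.div_rpow hE.le htn.le, ← Real.rpow_mul ht0.le,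
      Real.rpow_sub ht0, Real.rpow_one]
    ring
  linarith [key, heq.le, heq.ge]


private lemma small_case {T E n α : ℝ} (hn0 : 0 < n) (hα0 : 0 < α) (hα1 : α ≤ 1)
    {f : ℝ → ℝ} (hT : 2 < T) (hT4 : T ≤ 4) (hE : 0 < E)
    (hf : ContinuousOn f (Icc 0 T)) (hf0 : ∀ t ∈ Icc (0:ℝ) T, 0 ≤ f t)
    (hav : ∀ t ∈ Icc (2:ℝ) T, (2 / t) * ∫ s in (t / 2)..t, f s ≤ E / t ^ n) :
    (∫ t in (1:ℝ)..T, f t ^ α) ≤ 2 * E ^ α + E ^ α * T ^ (1 - n * α) := by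
  have hfac : ContinuousOn (fun t => f t ^ α) (Icc 0 T) :=
    hf.rpow_const (fun x _ => Or.inr hα0.le)
  have hint : ∀ a b : ℝ, 0 ≤ a → a ≤ b → b ≤ T →
      IntervalIntegrable (fun t => f t ^ α) MeasureTheory.volume a b :=
    fun a b ha hab hb =>
      (hfac.mono (Icc_subset_Icc ha hb)).intervalIntegrable_of_Icc hab
  have h1T2 : (1:ℝ) ≤ T / 2 := by linarith
  have hT22 : T / 2 ≤ 2 := by linarith
  have hsplit : (∫ t in (1:ℝ)..T, f t ^ α)
      = (∫ t in (1:ℝ)..(T/2), f t ^ α) + ∫ t in (T/2)..T, f t ^ α := by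
    rw [intervalIntegral.integral_add_adjacent_intervals
      (hint 1 (T/2) (by norm_num) h1T2 (by linarith))
      (hint (T/2) T (by linarith) (by linarith) le_rfl)]
  -- first part: compare with integral over [1,2]
  have hmono12 : (∫ t in (1:ℝ)..(T/2), f t ^ α) ≤ ∫ t in (1:ℝ)..(2:ℝ), f t ^ α := by
    have hsplit2 : (∫ t in (1:ℝ)..(2:ℝ), f t ^ α)
        = (∫ t in (1:ℝ)..(T/2), f t ^ α) + ∫ t in (T/2)..(2:ℝ), f t ^ α := by
      rw [intervalIntegral.integral_add_adjacent_intervals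
        (hint 1 (T/2) (by norm_num) h1T2 (by linarith))
        (hint (T/2) 2 (by linarith) hT22 (by linarith))]
    have hnn : 0 ≤ ∫ t in (T/2)..(2:ℝ), f t ^ α := by
      apply intervalIntegral.integral_nonneg hT22
      intro u hu
      exact Real.rpow_nonneg (hf0 u ⟨by linarith [hu.1], by linarith [hu.2]⟩) α
    linarith
  -- bound on [1,2]
  have h2n1 : (1:ℝ) ≤ (2:ℝ) ^ n := by
    have := Real.rpow_le_rpow_of_exponent_le (by norm_num : (1:ℝ) ≤ 2) hn0.le
    simpa using this
  have h2n : (0:ℝ) < (2:ℝ) ^ n := by linarith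
  set ε : ℝ := E / (2:ℝ) ^ n with hεdef
  have hε : 0 < ε := div_pos hE h2n
  have hI12 : (∫ s in (1:ℝ)..(2:ℝ), f s) ≤ ε := by
    have h := hav 2 ⟨le_rfl, hT.le⟩
    norm_num at h
    simpa [hεdef] using h
  have hseg := seg_bound hα0 hα1 hf hf0 (by norm_num : (0:ℝ) ≤ 1)
    (by norm_num : (1:ℝ) ≤ 2) (by linarith) hε
  have hεa : 0 ≤ ε ^ (α - 1) := Real.rpow_nonneg hε.le _
  have hεα : ε ^ (α - 1) * ε = ε ^ α := by
    rw [← Real.rpow_add_one hε.ne' (α - 1)]; ring_nf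
  have h12 : (∫ t in (1:ℝ)..(2:ℝ), f t ^ α) ≤ 2 * ε ^ α := by
    have := mul_le_mul_of_nonneg_left hI12 hεa
    have h2 : ((2:ℝ) - 1) * ε ^ α + ε ^ (α - 1) * ε = 2 * ε ^ α := by
      rw [hεα]; ring
    linarith [hseg]
  have hεE : ε ^ α ≤ E ^ α := by
    apply Real.rpow_le_rpow hε.le _ hα0.le
    rw [hεdef]
    exact div_le_self hE.le h2n1
  -- second part
  have hpiece := piece_bound hα0 hα1 hE hf hf0 hav (t := T) ⟨hT.le, le_rfl⟩
  calc (∫ t in (1:ℝ)..T, f t ^ α)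
      = (∫ t in (1:ℝ)..(T/2), f t ^ α) + ∫ t in (T/2)..T, f t ^ α := hsplit
    _ ≤ 2 * E ^ α + E ^ α * T ^ (1 - n * α) := by
        have := hmono12.trans h12
        nlinarith [hpiece]

private lemma main_ind (n α : ℝ) (hn : 1 < n) (hα : α ∈ Ioc (1 / n) 1) (m : ℕ) :
    ∀ (T E : ℝ) (f : ℝ → ℝ), 2 < T → T ≤ 2 ^ (m + 2) → 0 < E →
      ContinuousOn f (Icc 0 T) →
      (∀ t ∈ Icc (0 : ℝ) T, 0 ≤ f t) →
      (∀ t ∈ Icc (2 : ℝ) T, (2 / t) * ∫ s in (t / 2)..t, f s ≤ E / t ^ n) →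
      (∫ t in (1 : ℝ)..T, f t ^ α) ≤
        E ^ α * (3 + ((2:ℝ) ^ (n * α - 1) - 1)⁻¹
          - ((2:ℝ) ^ (n * α - 1) - 1)⁻¹ * T ^ (1 - n * α)) := by
  have hn0 : (0:ℝ) < n := by linarith
  have hα0 : 0 < α := lt_trans (by positivity) hα.1
  have hα1 : α ≤ 1 := hα.2
  have hnα : 1 < n * α := by
    have := hα.1
    calc (1:ℝ) = n * (1 / n) := by field_simp
      _ < n * α := by exact mul_lt_mul_of_pos_left this hn0
  have hβ : 0 < n * α - 1 := by linarith
  set K : ℝ := ((2:ℝ) ^ (n * α - 1) - 1)⁻¹ with hKdef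
  have h2β : 1 < (2:ℝ) ^ (n * α - 1) :=
    Real.one_lt_rpow_iff_of_pos (by norm_num) |>.mpr (Or.inl ⟨by norm_num, hβ⟩)
  have hK : 0 < K := by rw [hKdef]; exact inv_pos.mpr (by linarith)
  have hKβ : K * (2:ℝ) ^ (n * α - 1) = 1 + K := by
    rw [hKdef]
    have h1 : (2:ℝ) ^ (n * α - 1) - 1 ≠ 0 := by linarith
    field_simp
    ring
  have base : ∀ (T E : ℝ) (f : ℝ → ℝ), 2 < T → T ≤ 4 → 0 < E →
      ContinuousOn f (Icc 0 T) →
      (∀ t ∈ Icc (0 : ℝ) T, 0 ≤ f t) →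
      (∀ t ∈ Icc (2 : ℝ) T, (2 / t) * ∫ s in (t / 2)..t, f s ≤ E / t ^ n) →
      (∫ t in (1 : ℝ)..T, f t ^ α) ≤
        E ^ α * (3 + K - K * T ^ (1 - n * α)) := by
    intro T E f hT hT4 hE hf hf0 hav
    have hsc := small_case hn0 hα0 hα1 hT hT4 hE hf hf0 hav
    have hx0 : 0 ≤ T ^ (1 - n * α) := Real.rpow_nonneg (by linarith) _
    have hx1 : T ^ (1 - n * α) ≤ 1 :=
      Real.rpow_le_one_of_one_le_of_nonpos (by linarith) (by linarith)
    have hEα : 0 ≤ E ^ α := Real.rpow_nonneg hE.le _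
    have harith : 2 + T ^ (1 - n * α) ≤ 3 + K - K * T ^ (1 - n * α) := by
      nlinarith
    nlinarith [mul_le_mul_of_nonneg_left harith hEα]
  induction m with
  | zero =>
    intro T E f hT hTb
    exact base T E f hT (by norm_num at hTb; linarith)
  | succ m ih =>
    intro T E f hT hTb hE hf hf0 hav
    rcases le_or_gt T 4 with hT4 | hT4
    · exact base T E f hT hT4 hE hf hf0 hav
    · have hT2 : 2 < T / 2 := by linarith
      have hT2b : T / 2 ≤ 2 ^ (m + 2) := by
        have : (2:ℝ) ^ (m + 1 + 2) = 2 * 2 ^ (m + 2) := by ring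
        nlinarith [hTb]
      have hf' : ContinuousOn f (Icc 0 (T/2)) :=
        hf.mono (Icc_subset_Icc le_rfl (by linarith))
      have hf0' : ∀ t ∈ Icc (0:ℝ) (T/2), 0 ≤ f t :=
        fun t ht => hf0 t ⟨ht.1, by linarith [ht.2]⟩
      have hav' : ∀ t ∈ Icc (2:ℝ) (T/2), (2 / t) * ∫ s in (t / 2)..t, f s ≤ E / t ^ n :=
        fun t ht => hav t ⟨ht.1, by linarith [ht.2]⟩
      have hih := ih (T/2) E f hT2 hT2b hE hf' hf0' hav'
      have hpiece := piece_bound hα0 hα1 hE hf hf0 hav (t := T) ⟨by linarith, le_rfl⟩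
      have hfac : ContinuousOn (fun t => f t ^ α) (Icc 0 T) :=
        hf.rpow_const (fun x _ => Or.inr hα0.le)
      have hint : ∀ a b : ℝ, 0 ≤ a → a ≤ b → b ≤ T →
          IntervalIntegrable (fun t => f t ^ α) MeasureTheory.volume a b :=
        fun a b ha hab hb =>
          (hfac.mono (Icc_subset_Icc ha hb)).intervalIntegrable_of_Icc hab
      have hsplit : (∫ t in (1:ℝ)..T, f t ^ α)
          = (∫ t in (1:ℝ)..(T/2), f t ^ α) + ∫ t in (T/2)..T, f t ^ α := by
        rw [intervalIntegral.integral_add_adjacent_intervals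
          (hint 1 (T/2) (by norm_num) (by linarith) (by linarith))
          (hint (T/2) T (by linarith) (by linarith) le_rfl)]
      have hT0 : (0:ℝ) < T := by linarith
      have hy : (T / 2) ^ (1 - n * α) = T ^ (1 - n * α) * 2 ^ (n * α - 1) := by
        rw [Real.div_rpow hT0.le (by norm_num : (0:ℝ) ≤ 2)]
        rw [show (1 - n * α) = -(n * α - 1) by ring, Real.rpow_neg (by norm_num : (0:ℝ) ≤ 2)]
        field_simp
      have hKy : K * (T / 2) ^ (1 - n * α) = (1 + K) * T ^ (1 - n * α) := by
        rw [hy, show K * (T ^ (1 - n * α) * 2 ^ (n * α - 1))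
          = (K * 2 ^ (n * α - 1)) * T ^ (1 - n * α) by ring, hKβ]
      have hEα : 0 ≤ E ^ α := Real.rpow_nonneg hE.le _
      have harith : E ^ α * (3 + K - K * (T/2) ^ (1 - n * α)) + E ^ α * T ^ (1 - n * α)
          = E ^ α * (3 + K - K * T ^ (1 - n * α)) := by
        rw [hKy]; ring
      linarith [hsplit.le, hsplit.ge, hih, hpiece]


/-- Lemma A.4: let `T > 2`, `n > 1`, and let `f : [0,T] → [0,∞)` be nonnegative and
continuous with `(2/t)∫_{t/2}^t f(s) ds ≤ E/t^n` for all `t ∈ [2,T]`. Then for every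
`α ∈ (1/n, 1]` there is a constant `C > 0` depending only on `α` and `n` such that
`∫₁ᵀ f(t)^α dt ≤ C·E^α`. -/
theorem integral_rpow_bound_of_averaged_decay
    (n α : ℝ) (hn : 1 < n) (hα : α ∈ Ioc (1 / n) 1) :
    ∃ C : ℝ, 0 < C ∧
      ∀ (T E : ℝ) (f : ℝ → ℝ), 2 < T → 0 < E →
        ContinuousOn f (Icc 0 T) →
        (∀ t ∈ Icc (0 : ℝ) T, 0 ≤ f t) →
        (∀ t ∈ Icc (2 : ℝ) T, (2 / t) * ∫ s in (t / 2)..t, f s ≤ E / t ^ n) →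
        (∫ t in (1 : ℝ)..T, f t ^ α) ≤ C * E ^ α := by
  have hn0 : (0:ℝ) < n := by linarith
  have hα0 : 0 < α := lt_trans (by positivity) hα.1
  have hnα : 1 < n * α := by
    have := hα.1
    calc (1:ℝ) = n * (1 / n) := by field_simp
      _ < n * α := mul_lt_mul_of_pos_left this hn0
  have hβ : 0 < n * α - 1 := by linarith
  set K : ℝ := ((2:ℝ) ^ (n * α - 1) - 1)⁻¹ with hKdef
  have h2β : 1 < (2:ℝ) ^ (n * α - 1) :=
    Real.one_lt_rpow_iff_of_pos (by norm_num) |>.mpr (Or.inl ⟨by norm_num, hβ⟩)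
  have hK : 0 < K := by rw [hKdef]; exact inv_pos.mpr (by linarith)
  refine ⟨3 + K, by linarith, ?_⟩
  intro T E f hT hE hf hf0 hav
  obtain ⟨m, hm⟩ := exists_nat_gt T
  have hm2 : T ≤ 2 ^ (m + 2) := by
    have h1 : (m:ℝ) < (2:ℝ) ^ m := by
      have := @Nat.lt_two_pow_self m
      exact_mod_cast this
    have h2 : (2:ℝ) ^ m ≤ 2 ^ (m + 2) :=
      pow_le_pow_right₀ (by norm_num) (by omega)
    linarith
  have h := main_ind n α hn hα m T E f hT hm2 hE hf hf0 hav
  have hx0 : 0 ≤ T ^ (1 - n * α) := Real.rpow_nonneg (by linarith) _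
  have hEα : 0 ≤ E ^ α := Real.rpow_nonneg hE.le _
  calc (∫ t in (1:ℝ)..T, f t ^ α)
      ≤ E ^ α * (3 + K - K * T ^ (1 - n * α)) := h
    _ ≤ E ^ α * (3 + K) := by nlinarith [mul_nonneg hEα (mul_nonneg hK.le hx0)]
    _ = (3 + K) * E ^ α := by ring
end
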